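/- arXiv:math/0607113 — 4 statements merged into one kernel-verified Lean document; each statement's English description precedes it below -/
import Mathlib

section
/- Let M = I ×_f F be a standard static space-time with dim F ≥ 2. If the quadratic forms associated to Ric_F and to Q_F^f := Δ_F f · g_F − H_F^f are both positive semi-definite, then Ric(w, w) ≥ 0 for every causal tangent vector w of M (i.e., M satisfies the time-like and null convergence conditions). -/
open scoped RealInnerProductSpace

/-- Pointwise form of Theorem (TCC/NCC for standard static space-times):
at a point of `M = I ×_f F` the tangent space is `ℝ × E`, `E` the tangent
space of `F` (`dim F ≥ 2`) with inner product `g_F`; `Hop` is the (symmetric)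
Hessian operator of `f`, `lapf = Δ_F f` its trace, `Q = Δ_F f · g_F - H_F^f`,
`gM = -f² dt² ⊕ g_F`, and the Ricci tensor of `M` is
`Ric(w,w) = Ric_F(v,v) + (1/f) Q(v,v) - g(w,w)(1/f)Δ_F f` for `w = (u,v)`.
If `Ric_F` and `Q_F^f` are positive semi-definite, then `Ric(w,w) ≥ 0` for all
causal `w` (time-like and null convergence conditions). -/
theorem stmt12 {E : Type*} [NormedAddCommGroup E] [InnerProductSpace ℝ E]
    [FiniteDimensional ℝ E] (hdim : 2 ≤ Module.finrank ℝ E)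
    (fp : ℝ) (hfp : 0 < fp)
    (Hop : E →ₗ[ℝ] E) (hHsym : ∀ v w : E, ⟪Hop v, w⟫ = ⟪v, Hop w⟫)
    (lapf : ℝ) (hlap : lapf = LinearMap.trace ℝ E Hop)
    (Q : E → ℝ) (hQ : ∀ v, Q v = lapf * ⟪v, v⟫ - ⟪Hop v, v⟫)
    (ric : E → ℝ)
    (gM : ℝ × E → ℝ) (hgM : ∀ w, gM w = -(fp ^ 2) * w.1 ^ 2 + ⟪w.2, w.2⟫)
    (RicM : ℝ × E → ℝ)
    (hRicM : ∀ w, RicM w = ric w.2 + (1 / fp) * Q w.2 - gM w * ((1 / fp) * lapf))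
    (hric : ∀ v, 0 ≤ ric v) (hQpsd : ∀ v, 0 ≤ Q v) :
    ∀ w : ℝ × E, gM w ≤ 0 → 0 ≤ RicM w := by
  -- First show lapf ≥ 0 using an orthonormal basis
  have hlapf : 0 ≤ lapf := by
    set n := Module.finrank ℝ E with hn
    let b := stdOrthonormalBasis ℝ E
    have htr : lapf = ∑ i, ⟪b i, Hop (b i)⟫ := by
      rw [hlap, LinearMap.trace_eq_matrix_trace ℝ b.toBasis Hop, Matrix.trace]
      congr 1
      ext i
      rw [Matrix.diag_apply, LinearMap.toMatrix_apply]
      simp [OrthonormalBasis.coe_toBasis_repr_apply, OrthonormalBasis.repr_apply_apply,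
        real_inner_comm]
    have hsum : 0 ≤ ∑ i : Fin n, Q (b i) := Finset.sum_nonneg fun i _ => hQpsd _
    have hQi : ∀ i : Fin n, Q (b i) = lapf - ⟪b i, Hop (b i)⟫ := by
      intro i
      have hb : ‖b i‖ = 1 := b.orthonormal.1 i
      rw [hQ, real_inner_self_eq_norm_sq, hb, real_inner_comm]
      ring
    rw [Finset.sum_congr rfl (fun i _ => hQi i), Finset.sum_sub_distrib,
      Finset.sum_const, Finset.card_univ, Fintype.card_fin, ← htr] at hsum
    have hsum' : (0:ℝ) ≤ (n:ℝ) * lapf - lapf := by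
      simpa [nsmul_eq_mul] using hsum
    have hn1 : (1:ℝ) ≤ (n:ℝ) - 1 := by
      have : (2:ℝ) ≤ n := by exact_mod_cast hdim
      linarith
    nlinarith
  intro w hw
  rw [hRicM]
  have h1 := hric w.2
  have h2 := hQpsd w.2
  have h3 : 0 ≤ 1 / fp := by positivity
  nlinarith [mul_nonneg (mul_nonneg h3 hlapf) (neg_nonneg.mpr hw)]
end

section
/- Let M = I ×_f F be a standard static space-time with dim F ≥ 2. If the quadratic forms associated to Ric_F and Q_F^f = Δ_F f · g_F − H_F^f are both negative semi-definite, then Ric(w, w) ≤ 0 for every causal tangent vector w of M. -/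
open scoped RealInnerProductSpace

/-- Pointwise form: on `M = I ×_f F` (`dim F ≥ 2`), if the quadratic forms of
`Ric_F` and `Q_F^f = Δ_F f · g_F - H_F^f` are negative semi-definite, then
`Ric(w,w) ≤ 0` for every causal tangent vector `w = (u,v)` of `M`.  (Tracing
`Q_F^f ≤ 0` gives `Δ_F f ≤ 0` since `dim F ≥ 2`.) -/
theorem stmt13 {E : Type*} [NormedAddCommGroup E] [InnerProductSpace ℝ E]
    [FiniteDimensional ℝ E] (hdim : 2 ≤ Module.finrank ℝ E)
    (fp : ℝ) (hfp : 0 < fp)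
    (Hop : E →ₗ[ℝ] E) (hHsym : ∀ v w : E, ⟪Hop v, w⟫ = ⟪v, Hop w⟫)
    (lapf : ℝ) (hlap : lapf = LinearMap.trace ℝ E Hop)
    (Q : E → ℝ) (hQ : ∀ v, Q v = lapf * ⟪v, v⟫ - ⟪Hop v, v⟫)
    (ric : E → ℝ)
    (gM : ℝ × E → ℝ) (hgM : ∀ w, gM w = -(fp ^ 2) * w.1 ^ 2 + ⟪w.2, w.2⟫)
    (RicM : ℝ × E → ℝ)
    (hRicM : ∀ w, RicM w = ric w.2 + (1 / fp) * Q w.2 - gM w * ((1 / fp) * lapf))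
    (hric : ∀ v, ric v ≤ 0) (hQnsd : ∀ v, Q v ≤ 0) :
    ∀ w : ℝ × E, gM w ≤ 0 → RicM w ≤ 0 := by
  -- First show `lapf ≤ 0` by tracing `Q ≤ 0` over an orthonormal basis.
  set b := stdOrthonormalBasis ℝ E
  set n := Module.finrank ℝ E
  have htr : lapf = ∑ i, ⟪b i, Hop (b i)⟫ := by
    rw [hlap, LinearMap.trace_eq_matrix_trace ℝ b.toBasis, Matrix.trace]
    simp [Matrix.diag, LinearMap.toMatrix_apply, OrthonormalBasis.coe_toBasis_repr_apply,
      OrthonormalBasis.repr_apply_apply]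
  have hlb : ∀ i, lapf ≤ ⟪b i, Hop (b i)⟫ := by
    intro i
    have h1 := hQnsd (b i)
    rw [hQ (b i)] at h1
    have hni : ⟪b i, b i⟫ = (1 : ℝ) := real_inner_self_eq_norm_sq (b i) ▸ by
      simp [b.orthonormal.1 i]
    rw [hni, real_inner_comm] at h1
    linarith
  have hsum : (n : ℝ) * lapf ≤ lapf := by
    calc (n : ℝ) * lapf = ∑ _i : Fin n, lapf := by simp [mul_comm]
    _ ≤ ∑ i, ⟪b i, Hop (b i)⟫ := Finset.sum_le_sum fun i _ => hlb i
    _ = lapf := htr.symm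
  have hlapf : lapf ≤ 0 := by
    have h2 : (2 : ℝ) ≤ (n : ℝ) := by exact_mod_cast hdim
    nlinarith
  intro w hw
  rw [hRicM]
  have h1 := hric w.2
  have h2 := hQnsd w.2
  have h3 : (0:ℝ) < 1 / fp := by positivity
  nlinarith [mul_nonneg (mul_nonneg (neg_nonneg.mpr hw) h3.le) (neg_nonneg.mpr hlapf)]
end

section
/- Let M = I ×_f F be a standard static space-time with (F, g_F) Ricci flat and dim F ≥ 2. Then the quadratic form of Q_F^f = Δ_F f · g_F − H_F^f is positive semi-definite if and only if Ric(w, w) ≥ 0 for all null tangent vectors w of M (the null convergence condition). -/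
open scoped RealInnerProductSpace

/-- Pointwise form: on `M = I ×_f F` with `(F,g_F)` Ricci flat (`dim F ≥ 2`),
the quadratic form of `Q_F^f = Δ_F f · g_F - H_F^f` is positive semi-definite
iff `Ric(w,w) ≥ 0` for all null tangent vectors `w` of `M` (the null
convergence condition).  A vector `w = (u,v)` is null iff `gM w = 0`, `w ≠ 0`. -/
theorem stmt14 {E : Type*} [NormedAddCommGroup E] [InnerProductSpace ℝ E]
    [FiniteDimensional ℝ E] (hdim : 2 ≤ Module.finrank ℝ E)
    (fp : ℝ) (hfp : 0 < fp)
    (Hop : E →ₗ[ℝ] E) (hHsym : ∀ v w : E, ⟪Hop v, w⟫ = ⟪v, Hop w⟫)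
    (lapf : ℝ) (hlap : lapf = LinearMap.trace ℝ E Hop)
    (Q : E → ℝ) (hQ : ∀ v, Q v = lapf * ⟪v, v⟫ - ⟪Hop v, v⟫)
    (ric : E → ℝ) (hricflat : ∀ v, ric v = 0)
    (gM : ℝ × E → ℝ) (hgM : ∀ w, gM w = -(fp ^ 2) * w.1 ^ 2 + ⟪w.2, w.2⟫)
    (RicM : ℝ × E → ℝ)
    (hRicM : ∀ w, RicM w = ric w.2 + (1 / fp) * Q w.2 - gM w * ((1 / fp) * lapf)) :
    (∀ v, 0 ≤ Q v) ↔ (∀ w : ℝ × E, w ≠ 0 → gM w = 0 → 0 ≤ RicM w) := by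
  constructor
  · intro hQpos w _ hnull
    rw [hRicM w, hricflat, hnull]
    have := hQpos w.2
    have h1 : (0:ℝ) < 1 / fp := by positivity
    nlinarith
  · intro h v
    by_cases hv : v = 0
    · simp [hQ, hv]
    · set w : ℝ × E := (‖v‖ / fp, v) with hw
      have hnull : gM w = 0 := by
        rw [hgM]
        simp only [hw, real_inner_self_eq_norm_sq]
        field_simp
        ring
      have hwne : w ≠ 0 := by
        simp [hw, Prod.ext_iff, hv]
      have hr := h w hwne hnull
      rw [hRicM w, hricflat, hnull] at hr
      have h1 : (0:ℝ) < 1 / fp := by positivity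
      nlinarith [hr]
end

section
/- Let M = I ×_f F be a standard static space-time satisfying the Einstein equation 8π T = Ric − (τ/2) g. Then 8π T(∂_t, ∂_t) = (τ_F/2) f², so if T(w,w) ≥ 0 for all time-like vectors w (weak energy condition), then the scalar curvature τ_F of (F, g_F) is nonnegative. -/
open scoped RealInnerProductSpace

/-- Pointwise form: on `M = I ×_f F` with `8π T = Ric - (τ/2) g`,
`τ = τ_F - (2/f)Δ_F f`: at a point the vector `∂_t` is `(1,0)` and
`8π T(∂_t, ∂_t) = (τ_F/2) f²`; hence if `T(w,w) ≥ 0` on all time-like vectors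
(`gM w < 0`, weak energy condition), then `τ_F ≥ 0`. -/
theorem stmt16 {E : Type*} [NormedAddCommGroup E] [InnerProductSpace ℝ E]
    (fp : ℝ) (hfp : 0 < fp)
    (lapf : ℝ)  -- Δ_F f at the point
    (Q : E → ℝ) (hQ0 : Q 0 = 0)
    (ric : E → ℝ) (hric0 : ric 0 = 0)
    (τF : ℝ)  -- scalar curvature of (F, g_F) at the point
    (τ : ℝ) (hτ : τ = τF - (2 / fp) * lapf)  -- scalar curvature of M
    (gM : ℝ × E → ℝ) (hgM : ∀ w, gM w = -(fp ^ 2) * w.1 ^ 2 + ⟪w.2, w.2⟫)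
    (RicM : ℝ × E → ℝ)
    (hRicM : ∀ w, RicM w = ric w.2 + (1 / fp) * Q w.2 - gM w * ((1 / fp) * lapf))
    (T : ℝ × E → ℝ)
    (hEinstein : ∀ w, 8 * Real.pi * T w = RicM w - (τ / 2) * gM w) :
    8 * Real.pi * T (1, 0) = (τF / 2) * fp ^ 2 ∧
    ((∀ w : ℝ × E, gM w < 0 → 0 ≤ T w) → 0 ≤ τF) := by
  have hg0 : gM (1, 0) = -(fp ^ 2) := by
    rw [hgM]; simp
  have key : 8 * Real.pi * T (1, 0) = (τF / 2) * fp ^ 2 := by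
    rw [hEinstein, hRicM, hg0, hτ]
    simp only [hQ0, hric0]
    field_simp
    ring
  refine ⟨key, fun hW => ?_⟩
  have hT : 0 ≤ T (1, 0) := hW _ (by rw [hg0]; nlinarith)
  nlinarith [Real.pi_pos, key, mul_pos hfp hfp, sq_nonneg fp]
end
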